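/- Let A ⊆ I be sets of words over a finite alphabet, ε ∈ [0,1], ρ ∈ (0,1]. The following are equivalent: (1) there exists a distribution D with support S ⊆ I, D(w) ≤ ρ for all w ∈ S, and Pr_D[A] ≥ 1 − ε; (2) |I| ≥ 1/ρ and |A| ≥ (1−ε)/ρ. -/

import Mathlib

/-- For A ⊆ I, ε ∈ [0,1], ρ ∈ (0,1], the existence of a
distribution D with support contained in I, D(w) ≤ ρ on its support, and
D-probability of A at least 1−ε, is equivalent to |I| ≥ ⌈1/ρ⌉ and
|A| ≥ ⌈(1−ε)/ρ⌉ (infinite cardinalities allowed). -/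
theorem stmt_4 {Γ : Type} [Fintype Γ] (I A : Set (List Γ)) (hAI : A ⊆ I)
    (ρ ε : ℚ) (hρ0 : 0 < ρ) (hρ1 : ρ ≤ 1) (hε0 : 0 ≤ ε) (hε1 : ε ≤ 1) :
    (∃ D : List Γ → ℝ,
      (∀ w, 0 ≤ D w) ∧ HasSum D 1 ∧
      {w | 0 < D w} ⊆ I ∧
      (∀ w ∈ {w | 0 < D w}, D w ≤ (ρ : ℝ)) ∧
      1 - (ε : ℝ) ≤ ∑' w : A, D w)
    ↔ ((⌈(1 / ρ : ℚ)⌉₊ : ℕ∞) ≤ I.encard ∧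
        (⌈((1 - ε) / ρ : ℚ)⌉₊ : ℕ∞) ≤ A.encard) := by
  have hR0 : (0:ℝ) < (ρ:ℝ) := by exact_mod_cast hρ0
  constructor
  · rintro ⟨D, hD0, hDsum, hDsupp, hDρ, hDA⟩
    have hDsummable : Summable D := hDsum.summable
    constructor
    · rcases Set.finite_or_infinite {w | 0 < D w} with hS | hS
      · set s := hS.toFinset with hs
        have hzero : ∀ w ∉ s, D w = 0 := by
          intro w hw
          have : ¬ 0 < D w := by simpa [hs] using hw
          linarith [hD0 w]
        have hsum1 : (1:ℝ) = ∑ w ∈ s, D w := by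
          rw [← hDsum.tsum_eq]
          exact tsum_eq_sum hzero
        have hle : (1:ℝ) ≤ s.card * (ρ:ℝ) := by
          calc (1:ℝ) = ∑ w ∈ s, D w := hsum1
            _ ≤ s.card • (ρ:ℝ) := Finset.sum_le_card_nsmul s D _ (fun w hw => by
                exact hDρ w (by simpa [hs] using hw))
            _ = s.card * (ρ:ℝ) := by simp [nsmul_eq_mul]
        have hcard : ⌈(1 / ρ : ℚ)⌉₊ ≤ s.card := by
          rw [Nat.ceil_le]
          rw [div_le_iff₀ hρ0]
          exact_mod_cast (by linarith : (1:ℝ) ≤ (s.card : ℝ) * (ρ:ℝ))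
        calc (⌈(1 / ρ : ℚ)⌉₊ : ℕ∞) ≤ (s.card : ℕ∞) := by exact_mod_cast hcard
          _ = Set.encard {w | 0 < D w} := (hS.encard_eq_coe_toFinset_card).symm
          _ ≤ I.encard := Set.encard_le_encard hDsupp
      · have : I.Infinite := hS.mono hDsupp
        simp [this.encard_eq]
    · rcases Set.finite_or_infinite A with hA | hA
      · set s := hA.toFinset with hs
        have hDρ' : ∀ w, D w ≤ (ρ:ℝ) := by
          intro w
          rcases lt_or_eq_of_le (hD0 w) with h | h
          · exact hDρ w h
          · rw [← h]; linarith
        have htsum : ∑' w : A, D w = ∑ w ∈ s, D w := by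
          rw [show (∑' w : A, D w) = ∑' w, A.indicator D w from tsum_subtype A D,
            tsum_eq_sum (s := s) (f := A.indicator D) (fun w hw => by
              have : w ∉ A := by simpa [hs] using hw
              simp [Set.indicator_of_notMem this])]
          exact Finset.sum_congr rfl fun w hw =>
            Set.indicator_of_mem (by simpa [hs] using hw) D
        have hle : (1:ℝ) - (ε:ℝ) ≤ s.card * (ρ:ℝ) := by
          calc (1:ℝ) - (ε:ℝ) ≤ ∑' w : A, D w := hDA
            _ = ∑ w ∈ s, D w := htsum
            _ ≤ s.card • (ρ:ℝ) := Finset.sum_le_card_nsmul s D _ (fun w _ => hDρ' w)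
            _ = s.card * (ρ:ℝ) := by simp [nsmul_eq_mul]
        have hcard : ⌈((1 - ε) / ρ : ℚ)⌉₊ ≤ s.card := by
          rw [Nat.ceil_le, div_le_iff₀ hρ0]
          exact_mod_cast (by push_cast; linarith : ((1 - ε : ℚ):ℝ) ≤ (s.card : ℝ) * (ρ:ℝ))
        calc (⌈((1 - ε) / ρ : ℚ)⌉₊ : ℕ∞) ≤ (s.card : ℕ∞) := by exact_mod_cast hcard
          _ = A.encard := (hA.encard_eq_coe_toFinset_card).symm
      · simp [hA.encard_eq]
  · rintro ⟨hI, hA⟩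
    classical
    set n := ⌈(1 / ρ : ℚ)⌉₊ with hn
    set m := ⌈((1 - ε) / ρ : ℚ)⌉₊ with hm
    have hmn : m ≤ n := by
      exact Nat.ceil_le_ceil ((div_le_div_iff_of_pos_right hρ0).mpr (by linarith))
    -- numeric facts
    have hn1 : (1:ℝ) ≤ n * (ρ:ℝ) := by
      have := Nat.le_ceil (1 / ρ : ℚ)
      rw [div_le_iff₀ hρ0] at this
      exact_mod_cast this
    have hm1 : (1:ℝ) - (ε:ℝ) ≤ m * (ρ:ℝ) := by
      have := Nat.le_ceil ((1 - ε) / ρ : ℚ)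
      rw [div_le_iff₀ hρ0] at this
      have : ((1 - ε : ℚ) : ℝ) ≤ (m:ℝ) * (ρ:ℝ) := by exact_mod_cast this
      push_cast at this
      linarith
    -- pick the sets
    obtain ⟨T, hTA, hTcard⟩ := Set.exists_subset_encard_eq hA
    have hTfin : T.Finite := Set.finite_of_encard_eq_coe hTcard
    have hUdiff : ((n - m : ℕ) : ℕ∞) ≤ (I \ T).encard := by
      have h1 : (I \ T).encard + T.encard = I.encard := Set.encard_diff_add_encard_of_subset (hTA.trans hAI)
      rw [hTcard] at h1
      have h2 : (n : ℕ∞) ≤ (I \ T).encard + m := h1 ▸ hI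
      rw [ENat.coe_sub]
      exact tsub_le_iff_right.mpr h2
    obtain ⟨U, hUI, hUcard⟩ := Set.exists_subset_encard_eq hUdiff
    have hUfin : U.Finite := Set.finite_of_encard_eq_coe hUcard
    set t := hTfin.toFinset with ht
    set u := hUfin.toFinset with hu
    have htcard : t.card = m := by
      have := hTfin.encard_eq_coe_toFinset_card
      rw [hTcard] at this
      exact_mod_cast this.symm
    have hucard : u.card = n - m := by
      have := hUfin.encard_eq_coe_toFinset_card
      rw [hUcard] at this
      exact_mod_cast this.symm
    have hdisj : Disjoint t u := by
      rw [Finset.disjoint_left]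
      intro w hwt hwu
      have h1 : w ∈ T := by simpa [ht] using hwt
      have h2 : w ∈ I \ T := hUI (by simpa [hu] using hwu)
      exact h2.2 h1
    set p : ℝ := min 1 ((m:ℝ) * (ρ:ℝ)) with hp
    have hp0 : 0 ≤ p := le_min one_pos.le (by positivity)
    have hp1 : p ≤ 1 := min_le_left _ _
    have hpm : p ≤ (m:ℝ) * (ρ:ℝ) := min_le_right _ _
    have hpe : (1:ℝ) - (ε:ℝ) ≤ p := by
      apply le_min
      · have : (0:ℝ) ≤ (ε:ℝ) := by exact_mod_cast hε0
        linarith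
      · exact hm1
    have hrem : 1 - p ≤ ((n - m : ℕ):ℝ) * (ρ:ℝ) := by
      have hcast : ((n - m : ℕ):ℝ) = (n:ℝ) - m := by
        push_cast [hmn]; ring
      rw [hcast]
      rcases min_cases 1 ((m:ℝ) * (ρ:ℝ)) with ⟨h1, h2⟩ | ⟨h1, h2⟩ <;> rw [hp, h1] <;> nlinarith
    set D : List Γ → ℝ := fun w => if w ∈ t then p / m else if w ∈ u then (1 - p) / ((n - m : ℕ)) else 0 with hD
    have hDval_t : ∀ w ∈ t, D w = p / m := fun w hw => by simp [hD, hw]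
    have hDval_u : ∀ w ∈ u, D w = (1 - p) / ((n - m : ℕ)) := fun w hw => by
      have : w ∉ t := Finset.disjoint_right.mp hdisj hw
      simp [hD, hw, this]
    have hDval_0 : ∀ w ∉ t ∪ u, D w = 0 := by
      intro w hw
      rw [Finset.mem_union] at hw
      push_neg at hw
      simp [hD, hw.1, hw.2]
    have hD0 : ∀ w, 0 ≤ D w := by
      intro w
      rw [hD]
      dsimp only
      split_ifs
      · exact div_nonneg hp0 (Nat.cast_nonneg _)
      · exact div_nonneg (by linarith) (Nat.cast_nonneg _)
      · exact le_rfl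
    -- key sums
    have hsum_t : ∑ w ∈ t, D w = p := by
      rw [Finset.sum_congr rfl hDval_t, Finset.sum_const, htcard, nsmul_eq_mul]
      rcases Nat.eq_zero_or_pos m with h | h
      · simp [hp, h]
      · have hne : ((m:ℕ):ℝ) ≠ 0 := by positivity
        rw [← mul_div_assoc, mul_div_cancel_left₀ _ hne]
    have hsum_u : ∑ w ∈ u, D w = 1 - p := by
      rw [Finset.sum_congr rfl hDval_u, Finset.sum_const, hucard, nsmul_eq_mul]
      rcases Nat.eq_zero_or_pos (n - m) with h | h
      · have hnm : n = m := by omega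
        have : p = 1 := by
          rw [hp]
          apply min_eq_left
          rw [← hnm]; exact hn1
        simp [h, this]
      · have hne : ((n - m : ℕ):ℝ) ≠ 0 := by positivity
        rw [← mul_div_assoc, mul_div_cancel_left₀ _ hne]
    have hsum : HasSum D 1 := by
      have := hasSum_sum_of_ne_finset_zero (L := SummationFilter.unconditional _) (s := t ∪ u) (f := D) hDval_0
      rwa [Finset.sum_union hdisj, hsum_t, hsum_u, add_sub_cancel] at this
    refine ⟨D, hD0, hsum, ?_, ?_, ?_⟩
    · intro w hw
      by_contra hwI
      have : D w = 0 := by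
        apply hDval_0
        rw [Finset.mem_union]
        push_neg
        constructor
        · intro h; exact hwI (hAI (hTA (by simpa [ht] using h)))
        · intro h; exact hwI ((hUI (by simpa [hu] using h)).1)
      simp only [Set.mem_setOf_eq, this, lt_irrefl] at hw
    · intro w _
      rw [hD]
      dsimp only
      split_ifs with h1 h2
      · have hm0 : 0 < m := by
          rcases Nat.eq_zero_or_pos m with h | h
          · exfalso
            have : t.card = 0 := by rw [htcard, h]
            rw [Finset.card_eq_zero] at this
            simp [this] at h1
          · exact h
        rw [div_le_iff₀ (by exact_mod_cast hm0)]
        calc p ≤ (m:ℝ) * (ρ:ℝ) := hpm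
          _ = (ρ:ℝ) * m := mul_comm _ _
      · have hnm0 : 0 < n - m := by
          rcases Nat.eq_zero_or_pos (n - m) with h | h
          · exfalso
            have : u.card = 0 := by rw [hucard, h]
            rw [Finset.card_eq_zero] at this
            simp [this] at h2
          · exact h
        rw [div_le_iff₀ (by exact_mod_cast hnm0)]
        calc 1 - p ≤ ((n - m : ℕ):ℝ) * (ρ:ℝ) := hrem
          _ = (ρ:ℝ) * ((n - m : ℕ):ℝ) := mul_comm _ _
      · linarith
    · have hsummable : Summable D := hsum.summable
      have hind : Summable (A.indicator D) := hsummable.indicator A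
      calc 1 - (ε:ℝ) ≤ p := hpe
        _ = ∑ w ∈ t, D w := hsum_t.symm
        _ = ∑ w ∈ t, A.indicator D w := by
            refine Finset.sum_congr rfl fun w hw => ?_
            rw [Set.indicator_of_mem (hTA (by simpa [ht] using hw))]
        _ ≤ ∑' w, A.indicator D w := by
            refine Summable.sum_le_tsum t (fun w _ => ?_) hind
            exact Set.indicator_apply_nonneg (fun _ => hD0 w)
        _ = ∑' w : A, D w := (tsum_subtype A D).symm
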